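/- Let c > 0 and let G be a finite connected unicyclic simple graph (a connected graph containing exactly one cycle, equivalently a connected graph with as many edges as vertices). Then sr(K_G) < 1/√(1+c). -/

import Mathlib

/-- `K_G = D⁻¹ A_G` where `D` is the diagonal matrix with entries `c + d(u,G)`. -/
noncomputable def Kg {V : Type} [Fintype V] [DecidableEq V] (c : ℝ)
    (G : SimpleGraph V) [DecidableRel G.Adj] : Matrix V V ℝ :=
  Matrix.of fun u v => (G.adjMatrix ℝ) u v / (c + (G.degree u : ℝ))

/-- The spectral radius of a real matrix: the largest modulus of a (complex) eigenvalue. -/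
noncomputable def sr {V : Type} [Fintype V] [DecidableEq V] (A : Matrix V V ℝ) : ℝ :=
  sSup ((fun z : ℂ => ‖z‖) '' spectrum ℂ (A.map Complex.ofReal))

/-! `K_G` is entrywise nonnegative, so (Collatz–Wielandt) it suffices to find a positive vector
`ω` with `K_G ω < ω / √(1+c)` entrywise. Let `h` be the distance to the cycle. Counting each
vertex's neighbours one level lower twice and those on its own level once gives `2|E| = 2|V|` in
total, while each vertex contributes at least `2`; hence every cycle vertex has exactly two
neighbours on the cycle and every other vertex exactly one neighbour closer to it. With
`β = √(1+c)`, the weights `β^(-h)` then satisfy the required inequality with equality off the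
cycle; the perturbation `(A - q^h) β^(-h)`, with `q` small and `A` large, makes it strict
everywhere. -/

open Finset Matrix

namespace Matrix

variable {n : Type} [Fintype n] [DecidableEq n]

lemma exists_mulVec_eq_smul_of_mem_spectrum {M : Matrix n n ℂ} {μ : ℂ} (hμ : μ ∈ spectrum ℂ M) :
    ∃ x : n → ℂ, x ≠ 0 ∧ M *ᵥ x = μ • x := by
  rw [← spectrum_toLin', ← Module.End.hasEigenvalue_iff_mem_spectrum] at hμ
  obtain ⟨x, hx⟩ := hμ.exists_hasEigenvector
  exact ⟨x, hx.2, by simpa using hx.apply_eq_smul⟩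

lemma norm_lt_of_mem_spectrum_of_mulVec_lt {M : Matrix n n ℝ} (hM : ∀ i j, 0 ≤ M i j)
    {ω : n → ℝ} (hω : ∀ i, 0 < ω i) {r : ℝ} (hr : ∀ i, (M *ᵥ ω) i < r * ω i) {μ : ℂ}
    (hμ : μ ∈ spectrum ℂ (M.map Complex.ofReal)) : ‖μ‖ < r := by
  obtain ⟨x, hx, hxμ⟩ := exists_mulVec_eq_smul_of_mem_spectrum hμ
  obtain ⟨j, hj⟩ := Function.ne_iff.mp hx
  have : Nonempty n := ⟨j⟩
  obtain ⟨i, -, hi⟩ := exists_max_image univ (fun i => ‖x i‖ / ω i) univ_nonempty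
  set t := ‖x i‖ / ω i
  have hxt : ∀ k, ‖x k‖ ≤ t * ω k := fun k =>
    (div_le_iff₀ (hω k)).mp (hi k (mem_univ k))
  have hxi : 0 < ‖x i‖ := by
    have : 0 < ‖x j‖ / ω j := div_pos (norm_pos_iff.mpr hj) (hω j)
    exact (div_pos_iff_of_pos_right (hω i)).mp (this.trans_le (hi j (mem_univ j)))
  refine lt_of_mul_lt_mul_right ?_ hxi.le
  calc ‖μ‖ * ‖x i‖ = ‖∑ k, (M i k : ℂ) * x k‖ := by
        rw [← norm_mul, ← smul_eq_mul, ← Pi.smul_apply μ x i, ← hxμ]; rfl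
    _ ≤ ∑ k, M i k * ‖x k‖ := by
        refine (norm_sum_le _ _).trans_eq (sum_congr rfl fun k _ => ?_)
        rw [norm_mul, Complex.norm_real, Real.norm_of_nonneg (hM i k)]
    _ ≤ ∑ k, M i k * (t * ω k) :=
        sum_le_sum fun k _ => mul_le_mul_of_nonneg_left (hxt k) (hM i k)
    _ = t * (M *ᵥ ω) i := by
        simp only [mulVec, dotProduct, mul_sum]; exact sum_congr rfl fun k _ => by ring
    _ < t * (r * ω i) := mul_lt_mul_of_pos_left (hr i) (div_pos hxi (hω i))
    _ = r * ‖x i‖ := by simp only [t]; field_simp [(hω i).ne']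

end Matrix

lemma sr_lt_of_mulVec_lt {n : Type} [Fintype n] [DecidableEq n] [Nonempty n]
    {M : Matrix n n ℝ} (hM : ∀ i j, 0 ≤ M i j) {ω : n → ℝ} (hω : ∀ i, 0 < ω i) {r : ℝ}
    (hr : ∀ i, (M *ᵥ ω) i < r * ω i) : sr M < r := by
  have hne : (spectrum ℂ (M.map Complex.ofReal)).Nonempty :=
    spectrum.nonempty_of_isAlgClosed_of_finiteDimensional ℂ _
  obtain ⟨μ, hμ, hsr⟩ := (hne.image (‖·‖)).csSup_mem ((Matrix.finite_spectrum _).image _)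
  rw [sr, ← hsr]
  exact Matrix.norm_lt_of_mem_spectrum_of_mulVec_lt hM hω hr hμ

namespace SimpleGraph

lemma Walk.IsCycle.two_le_card_neighborFinset_inter_support {V : Type} [Fintype V]
    [DecidableEq V] {G : SimpleGraph V} [DecidableRel G.Adj] {v u : V} {p : G.Walk v v}
    (hp : p.IsCycle) (hu : u ∈ p.support) :
    2 ≤ #(G.neighborFinset u ∩ p.support.toFinset) := by
  have hq := hp.rotate hu
  refine one_lt_card.mpr ⟨_, ?_, _, ?_, hq.snd_ne_penultimate⟩ <;>
    simp only [mem_inter, mem_neighborFinset, List.mem_toFinset,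
      ← Walk.mem_support_rotate_iff p u hu]
  · exact ⟨Walk.adj_snd hq.not_nil, Walk.getVert_mem_support _ _⟩
  · exact ⟨(Walk.adj_penultimate hq.not_nil).symm, Walk.getVert_mem_support _ _⟩

section distToFinset

variable {V : Type} (G : SimpleGraph V)

noncomputable def distToFinset (C : Finset V) (hC : C.Nonempty) (u : V) : ℕ :=
  C.inf' hC (G.dist u)

variable {G} {C : Finset V} {hC : C.Nonempty}

lemma distToFinset_eq_zero_iff (hG : G.Connected) {u : V} :
    G.distToFinset C hC u = 0 ↔ u ∈ C := by
  refine ⟨fun h => ?_, fun hu => Nat.eq_zero_of_le_zero ?_⟩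
  · obtain ⟨w, hw, hdist⟩ := exists_mem_eq_inf' hC (G.dist u)
    rwa [hG.dist_eq_zero_iff.mp (hdist ▸ h : G.dist u w = 0)]
  · exact (inf'_le _ hu).trans_eq dist_self

lemma distToFinset_le_succ_of_adj (hG : G.Connected) {u v : V} (huv : G.Adj u v) :
    G.distToFinset C hC v ≤ G.distToFinset C hC u + 1 := by
  obtain ⟨w, hw, hdist⟩ := exists_mem_eq_inf' hC (G.dist u)
  calc G.distToFinset C hC v ≤ G.dist v w := inf'_le _ hw
    _ ≤ G.dist v u + G.dist u w := hG.dist_triangle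
    _ = G.distToFinset C hC u + 1 := by
        rw [dist_eq_one_iff_adj.mpr huv.symm, distToFinset, hdist, add_comm]

lemma exists_adj_distToFinset_lt (hG : G.Connected) {u : V} (hu : G.distToFinset C hC u ≠ 0) :
    ∃ v, G.Adj u v ∧ G.distToFinset C hC v < G.distToFinset C hC u := by
  obtain ⟨w, hw, hdist⟩ := exists_mem_eq_inf' hC (G.dist u)
  obtain ⟨p, hp⟩ := hG.exists_walk_length_eq_dist u w
  cases p with
  | nil => exact absurd (hdist.trans dist_self) hu
  | cons hadj q =>
    refine ⟨_, hadj, ?_⟩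
    calc G.distToFinset C hC _ ≤ G.dist _ w := inf'_le _ hw
      _ ≤ q.length := dist_le q
      _ < G.distToFinset C hC u := by
          rw [distToFinset, hdist, ← hp, Walk.length_cons]; omega

end distToFinset

section levels

variable {V : Type} [Fintype V] (G : SimpleGraph V) [DecidableRel G.Adj] (h : V → ℕ)

def lowerNeighborFinset (u : V) : Finset V := {v ∈ G.neighborFinset u | h v < h u}

def levelNeighborFinset (u : V) : Finset V := {v ∈ G.neighborFinset u | h v = h u}

def upperNeighborFinset (u : V) : Finset V := {v ∈ G.neighborFinset u | h u < h v}

lemma card_lower_add_card_level_add_card_upper (u : V) :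
    #(G.lowerNeighborFinset h u) + #(G.levelNeighborFinset h u) + #(G.upperNeighborFinset h u)
      = G.degree u := by
  simp only [lowerNeighborFinset, levelNeighborFinset, upperNeighborFinset, card_filter,
    ← sum_add_distrib, ← card_neighborFinset_eq_degree, card_eq_sum_ones (G.neighborFinset u)]
  refine sum_congr rfl fun v _ => ?_
  rcases lt_trichotomy (h v) (h u) with hvu | hvu | hvu <;> grind

lemma sum_card_lowerNeighborFinset_eq_sum_card_upperNeighborFinset :
    ∑ u, #(G.lowerNeighborFinset h u) = ∑ u, #(G.upperNeighborFinset h u) := by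
  simp only [lowerNeighborFinset, upperNeighborFinset, neighborFinset_eq_filter, filter_filter,
    card_filter]
  rw [sum_comm]
  simp only [G.adj_comm]

lemma sum_two_mul_card_lower_add_card_level [DecidableEq V] :
    ∑ u, (2 * #(G.lowerNeighborFinset h u) + #(G.levelNeighborFinset h u))
      = 2 * #G.edgeFinset := by
  rw [← sum_degrees_eq_twice_card_edges]
  simp only [← G.card_lower_add_card_level_add_card_upper h, sum_add_distrib, ← mul_sum,
    ← G.sum_card_lowerNeighborFinset_eq_sum_card_upperNeighborFinset h]
  ring

variable {G h}

lemma two_mul_card_lower_add_card_level_eq_two [DecidableEq V]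
    (hE : #G.edgeFinset = Fintype.card V)
    (hlower : ∀ u, h u ≠ 0 → (G.lowerNeighborFinset h u).Nonempty)
    (hlevel : ∀ u, h u = 0 → 2 ≤ #(G.levelNeighborFinset h u)) (u : V) :
    2 * #(G.lowerNeighborFinset h u) + #(G.levelNeighborFinset h u) = 2 := by
  have hge : ∀ u, 2 ≤ 2 * #(G.lowerNeighborFinset h u) + #(G.levelNeighborFinset h u) := by
    intro u
    by_cases hu : h u = 0
    · exact (hlevel u hu).trans (Nat.le_add_left _ _)
    · have := (hlower u hu).card_pos
      omega
  have hsum :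
      ∑ u : V, 2 = ∑ u, (2 * #(G.lowerNeighborFinset h u) + #(G.levelNeighborFinset h u)) := by
    rw [G.sum_two_mul_card_lower_add_card_level, hE, sum_const, card_univ, smul_eq_mul, mul_comm]
  exact ((sum_eq_sum_iff_of_le fun u _ => hge u).mp hsum u (mem_univ u)).symm

lemma sum_neighborFinset_comp_eq (hlip : ∀ u v, G.Adj u v → h v ≤ h u + 1) (f : ℕ → ℝ)
    (u : V) :
    ∑ v ∈ G.neighborFinset u, f (h v)
      = #(G.lowerNeighborFinset h u) * f (h u - 1) + #(G.levelNeighborFinset h u) * f (h u)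
        + #(G.upperNeighborFinset h u) * f (h u + 1) := by
  simp only [lowerNeighborFinset, levelNeighborFinset, upperNeighborFinset, ← nsmul_eq_mul,
    ← sum_const, sum_filter, ← sum_add_distrib]
  refine sum_congr rfl fun v hv => ?_
  have huv := hlip u v ((mem_neighborFinset G u v).mp hv)
  have hvu := hlip v u ((mem_neighborFinset G u v).mp hv).symm
  rcases lt_trichotomy (h v) (h u) with hlt | heq | hgt
  · rw [if_pos hlt, if_neg hlt.ne, if_neg hlt.not_gt, show h v = h u - 1 by omega]; ring
  · rw [if_neg heq.not_lt, if_pos heq, if_neg heq.symm.not_lt, heq]; ring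
  · rw [if_neg hgt.not_gt, if_neg hgt.ne', if_pos hgt, show h v = h u + 1 by omega]; ring

end levels

lemma exists_height_of_card_edgeFinset_eq {V : Type} [Fintype V] [DecidableEq V]
    {G : SimpleGraph V} [DecidableRel G.Adj] (hG : G.Connected)
    (hE : #G.edgeFinset = Fintype.card V) :
    ∃ h : V → ℕ, (∀ u v, G.Adj u v → h v ≤ h u + 1) ∧
      (∀ u, h u = 0 → #(G.lowerNeighborFinset h u) = 0 ∧ #(G.levelNeighborFinset h u) = 2) ∧
      (∀ u, h u ≠ 0 → #(G.lowerNeighborFinset h u) = 1 ∧ #(G.levelNeighborFinset h u) = 0) := by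
  have hcyclic : ¬ G.IsAcyclic := fun hacyc => by
    have := IsTree.card_edgeFinset ⟨hG, hacyc⟩
    omega
  obtain ⟨w, p, hp⟩ : ∃ w, ∃ p : G.Walk w w, p.IsCycle := by
    simpa [IsAcyclic] using hcyclic
  set C := p.support.toFinset
  have hC : C.Nonempty := ⟨w, by simp [C]⟩
  set h := G.distToFinset C hC
  have hlower : ∀ u, h u ≠ 0 → (G.lowerNeighborFinset h u).Nonempty := fun u hu => by
    obtain ⟨v, hadj, hlt⟩ := exists_adj_distToFinset_lt hG hu
    exact ⟨v, mem_filter.mpr ⟨(mem_neighborFinset G u v).mpr hadj, hlt⟩⟩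
  have hlevel : ∀ u, h u = 0 → 2 ≤ #(G.levelNeighborFinset h u) := fun u hu => by
    refine (hp.two_le_card_neighborFinset_inter_support
      (List.mem_toFinset.mp ((distToFinset_eq_zero_iff hG).mp hu))).trans (card_le_card ?_)
    intro v hv
    obtain ⟨hvu, hvC⟩ := mem_inter.mp hv
    exact mem_filter.mpr ⟨hvu, hu ▸ (distToFinset_eq_zero_iff hG).mpr hvC⟩
  have hcount := two_mul_card_lower_add_card_level_eq_two hE hlower hlevel
  refine ⟨h, fun u v => distToFinset_le_succ_of_adj hG, fun u hu => ?_, fun u hu => ?_⟩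
  · have hempty : #(G.lowerNeighborFinset h u) = 0 :=
      card_eq_zero.mpr (filter_eq_empty_iff.mpr fun v _ => by omega)
    have := hcount u
    omega
  · have := (hlower u hu).card_pos
    have := hcount u
    omega

end SimpleGraph

noncomputable def heightWeight (β A q : ℝ) (j : ℕ) : ℝ := (A - q ^ j) / β ^ j

section heightWeight

variable {β A q k : ℝ}

lemma heightWeight_pos (hβ : 0 < β) (hq0 : 0 ≤ q) (hq1 : q ≤ 1) (hA : 1 < A) (j : ℕ) :
    0 < heightWeight β A q j :=
  div_pos (by linarith [pow_le_one₀ hq0 hq1 (n := j)]) (pow_pos hβ j)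

lemma heightWeight_cycle_lt (hβ : 0 < β) (hk : k * (1 - q) < (β - 1) ^ 2 * (A - 1)) :
    β * (2 * heightWeight β A q 0 + k * heightWeight β A q 1)
      < (β ^ 2 + 1 + k) * heightWeight β A q 0 := by
  have h0 : heightWeight β A q 0 = A - 1 := by simp [heightWeight]
  have h1 : β * heightWeight β A q 1 = A - q := by
    simp only [heightWeight, pow_one]; field_simp
  rw [mul_add, mul_left_comm β k, h1, h0]
  linarith

lemma heightWeight_tree_lt (hβ : 0 < β) (hq0 : 0 < q) (hq1 : q < 1) (hk : k * q < β ^ 2)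
    (m : ℕ) :
    β * (heightWeight β A q m + k * heightWeight β A q (m + 2))
      < (β ^ 2 + k) * heightWeight β A q (m + 1) := by
  have hdefect : (β ^ 2 + k) * heightWeight β A q (m + 1)
      - β * (heightWeight β A q m + k * heightWeight β A q (m + 2))
      = q ^ m * (1 - q) * (β ^ 2 - k * q) / β ^ (m + 1) := by
    simp only [heightWeight]; field_simp; ring
  have : 0 < q ^ m * (1 - q) * (β ^ 2 - k * q) / β ^ (m + 1) := by
    have := sub_pos.mpr hq1; have := sub_pos.mpr hk; positivity
  linarith

end heightWeight

section Kg

variable {V : Type} [Fintype V] [DecidableEq V] {c : ℝ} {G : SimpleGraph V} [DecidableRel G.Adj]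

lemma Kg_mulVec_apply (x : V → ℝ) (u : V) :
    (Kg c G *ᵥ x) u = (∑ v ∈ G.neighborFinset u, x v) / (c + G.degree u) := by
  simp only [mulVec, dotProduct, Kg, of_apply, SimpleGraph.adjMatrix_apply, sum_div,
    SimpleGraph.neighborFinset_eq_filter, sum_filter]
  exact sum_congr rfl fun v _ => by split_ifs <;> simp [div_eq_inv_mul]

lemma Kg_nonneg (hc : 0 ≤ c) (u v : V) : 0 ≤ Kg c G u v :=
  div_nonneg (by simp only [SimpleGraph.adjMatrix_apply]; split_ifs <;> norm_num)
    (by positivity)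

lemma exists_pos_mulVec_Kg_lt (hc : 0 < c) (hG : G.Connected)
    (hE : #G.edgeFinset = Fintype.card V) :
    ∃ ω : V → ℝ, (∀ u, 0 < ω u) ∧ ∀ u, (Kg c G *ᵥ ω) u < 1 / √(1 + c) * ω u := by
  obtain ⟨h, hlip, hcycle, htree⟩ := SimpleGraph.exists_height_of_card_edgeFinset_eq hG hE
  set β := √(1 + c)
  have hβsq : β ^ 2 = 1 + c := Real.sq_sqrt (by linarith)
  have hβ1 : 1 < β := by rw [Real.lt_sqrt zero_le_one]; linarith
  set N : ℝ := Fintype.card V + 1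
  have hN : 1 < N := by
    have : (0 : ℝ) < Fintype.card V := by exact_mod_cast Fintype.card_pos_iff.mpr hG.nonempty
    linarith
  set q := 1 / N
  set A := 1 + N / (β - 1) ^ 2
  have hq0 : 0 < q := by positivity
  have hq1 : q < 1 := (div_lt_one (by linarith)).mpr hN
  have hA : (β - 1) ^ 2 * (A - 1) = N := by
    simp only [A, add_sub_cancel_left]; field_simp [(sub_pos.mpr hβ1).ne']
  have hupper : ∀ u, (#(G.upperNeighborFinset h u) : ℝ) < N := fun u => by
    simp only [N]; exact_mod_cast Nat.lt_succ_of_le (card_le_univ _)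
  set w := heightWeight β A q
  have hw : ∀ j, 0 < w j := heightWeight_pos (by linarith) hq0.le hq1.le
    (lt_add_of_pos_right 1 (div_pos (by linarith) (pow_pos (sub_pos.mpr hβ1) 2)))
  refine ⟨fun u => w (h u), fun u => hw (h u), fun u => ?_⟩
  suffices β * ∑ v ∈ G.neighborFinset u, w (h v) < (c + G.degree u) * w (h u) by
    rw [Kg_mulVec_apply, div_lt_iff₀ (by positivity), one_div, inv_mul_eq_div,
      div_mul_eq_mul_div, lt_div_iff₀ (by linarith)]
    linarith
  rw [SimpleGraph.sum_neighborFinset_comp_eq hlip,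
    ← G.card_lower_add_card_level_add_card_upper h u]
  have hkN := hupper u
  generalize #(G.upperNeighborFinset h u) = k at hkN ⊢
  by_cases hu : h u = 0
  · obtain ⟨h0, h2⟩ := hcycle u hu
    have hk : k * (1 - q) < (β - 1) ^ 2 * (A - 1) := by
      rw [hA]; nlinarith
    calc _ = β * (2 * w 0 + k * w 1) := by rw [hu, h0, h2]; push_cast; ring
      _ < (β ^ 2 + 1 + k) * w 0 := heightWeight_cycle_lt (by linarith) hk
      _ = _ := by rw [hu, h0, h2, hβsq]; push_cast; ring
  · obtain ⟨m, hm⟩ : ∃ m, h u = m + 1 := Nat.exists_eq_add_one.mpr (Nat.pos_of_ne_zero hu)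
    obtain ⟨h1, h0⟩ := htree u hu
    have hk : k * q < β ^ 2 := by
      have : k * q < 1 := by
        simp only [q, mul_one_div]; exact (div_lt_one (by linarith)).mpr hkN
      nlinarith
    calc _ = β * (w m + k * w (m + 2)) := by
          rw [hm, h0, h1, Nat.add_sub_cancel]; push_cast; ring
      _ < (β ^ 2 + k) * w (m + 1) := heightWeight_tree_lt (by linarith) hq0 hq1 hk m
      _ = _ := by rw [hm, h0, h1, hβsq]; push_cast; ring

end Kg

/-- for a finite connected unicyclic graph G (as many edges as
vertices) and c > 0, sr(K_G) < 1/√(1+c). -/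
theorem unicyclic_spectral_radius_lt
    {V : Type} [Fintype V] [DecidableEq V] (c : ℝ) (hc : 0 < c)
    (G : SimpleGraph V) [DecidableRel G.Adj]
    (hconn : G.Connected) (huni : G.edgeFinset.card = Fintype.card V) :
    sr (Kg c G) < 1 / Real.sqrt (1 + c) := by
  have : Nonempty V := hconn.nonempty
  obtain ⟨ω, hω, hKω⟩ := exists_pos_mulVec_Kg_lt hc hconn huni
  exact sr_lt_of_mulVec_lt (Kg_nonneg hc.le) hω hKω
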